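/- arXiv:1001.1150 — 5 statements merged into one kernel-verified Lean document; each statement's English description precedes it below -/
import Mathlib

section
/- Let $k$ be a field of characteristic zero and let $\phi \in k[[x_1,\dots,x_n]]$ be a power series that is algebraic over the rational function field $k(x_1,\dots,x_n)$. Then there exists a finitely generated $\mathbb{Z}$-subalgebra $A \subseteq k$ such that all coefficients of $\phi$ lie in $A$, i.e. $\phi \in A[[x_1,\dots,x_n]]$. -/
/-!
Replacing an annihilating polynomial `G` of `φ` by `G'` while `G'(φ) = 0` (in characteristic
zero this lowers the degree and keeps `G ≠ 0`), we may assume `G'(φ) ≠ 0`.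
Let `c` be the deg-lex least exponent with `u := [x^c] G'(φ) ≠ 0`. Comparing the coefficients of
`x^(c + I)` in `G(φ) = 0` and expanding `G` to first order around the truncation of `φ` below `I`
gives `u · [x^I] φ` as a polynomial expression, with integer coefficients, in the coefficients of
the coefficients of `G` and in coefficients `[x^J] φ` with `J ≺ I`. By well-founded induction
every coefficient of `φ` lies in the ring generated by `u⁻¹`, the coefficients of `G` and the
finitely many `[x^J] φ` with `J ≼ c`.
-/

open Polynomial MonomialOrder Finset.HasAntidiagonal

theorem Polynomial.eval_mem_of_coeff_mem {R S : Type*} [Semiring R] [SetLike S R]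
    [SubsemiringClass S R] {s : S} {p : R[X]} (hp : ∀ i, p.coeff i ∈ s) {x : R} (hx : x ∈ s) :
    p.eval x ∈ s := by
  rw [eval_eq_sum_range]
  exact sum_mem fun i _ => mul_mem (hp i) (pow_mem hx i)

theorem Polynomial.exists_eval_map_eq_zero_and_eval_derivative_ne_zero {S T : Type*}
    [Semiring S] [IsAddTorsionFree S] [Semiring T] {f : S →+* T}
    (hf : Function.Injective f) {x : T} {F : S[X]} (hF : F ≠ 0) (hx : (F.map f).eval x = 0) :
    ∃ G : S[X], (G.map f).eval x = 0 ∧ (G.map f).derivative.eval x ≠ 0 := by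
  induction hd : F.natDegree using Nat.strong_induction_on generalizing F with
  | _ d ih =>
  by_cases hF' : (F.map f).derivative.eval x = 0
  · have hdeg : F.natDegree ≠ 0 := by
      intro h0
      rw [eq_C_of_natDegree_eq_zero h0, map_C, eval_C, map_eq_zero_iff f hf] at hx
      exact hF (by rw [eq_C_of_natDegree_eq_zero h0, hx, C_0])
    rw [derivative_map] at hF'
    exact ih _ (hd ▸ natDegree_derivative_lt hdeg) (derivative_ne_zero.mpr hdeg) hF' rfl
  · exact ⟨F, hx, hF'⟩

theorem MonomialOrder.finite_setOf_degLex_le {σ : Type*} [LinearOrder σ] [WellFoundedGT σ]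
    [Finite σ] (c : σ →₀ ℕ) : {d | d ≼[degLex] c}.Finite :=
  (Finsupp.finite_of_degree_le c.degree).subset fun _ hd => Finsupp.DegLex.monotone_degree hd

namespace MvPowerSeries

variable {σ R : Type*}

section Semiring

variable [Semiring R] (m : MonomialOrder σ)

theorem exists_coeff_ne_zero_forall_lt {f : MvPowerSeries σ R} (hf : f ≠ 0) :
    ∃ c, coeff c f ≠ 0 ∧ ∀ d, d ≺[m] c → coeff d f = 0 := by
  obtain ⟨e, he⟩ := (ne_zero_iff_exists_coeff_ne_zero f).mp hf
  obtain ⟨c, hc, hmin⟩ :=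
    (InvImage.wf m.toSyn wellFounded_lt).has_min {d | coeff d f ≠ 0} ⟨e, he⟩
  exact ⟨c, hc, fun d hd => by_contra fun h => hmin d h hd⟩

theorem coeff_mul_eq_zero_of_lt_of_le {f g : MvPowerSeries σ R} {a b e : σ →₀ ℕ}
    (hf : ∀ d, d ≺[m] a → coeff d f = 0) (hg : ∀ d, d ≼[m] b → coeff d g = 0)
    (he : e ≼[m] a + b) : coeff e (f * g) = 0 := by
  classical
  rw [coeff_mul]
  refine Finset.sum_eq_zero fun x hx => ?_
  rw [mem_antidiagonal] at hx
  by_cases h₁ : x.1 ≺[m] a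
  · rw [hf _ h₁, zero_mul]
  refine mul_eq_zero_of_right _ (hg _ (not_lt.mp fun h₂ => he.not_gt ?_))
  rw [← hx, map_add, map_add]
  exact add_lt_add_of_le_of_lt (not_lt.mp h₁) h₂

theorem coeff_mul_eq_zero_of_le {f g : MvPowerSeries σ R} {b e : σ →₀ ℕ}
    (hg : ∀ d, d ≼[m] b → coeff d g = 0) (he : e ≼[m] b) : coeff e (f * g) = 0 :=
  coeff_mul_eq_zero_of_lt_of_le m (a := 0) (fun d hd => absurd hd (by simp)) hg
    (by rwa [zero_add])

theorem coeff_add_mul_of_lt {f g : MvPowerSeries σ R} {a b : σ →₀ ℕ}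
    (hf : ∀ d, d ≺[m] a → coeff d f = 0) (hg : ∀ d, d ≺[m] b → coeff d g = 0) :
    coeff (a + b) (f * g) = coeff a f * coeff b g := by
  classical
  rw [coeff_mul, Finset.sum_eq_single_of_mem (a, b) (mem_antidiagonal.mpr rfl)]
  rintro ⟨x, y⟩ hxy hne
  rw [mem_antidiagonal] at hxy
  by_cases hx : x ≺[m] a
  · rw [hf x hx, zero_mul]
  by_cases hy : y ≺[m] b
  · rw [hg y hy, mul_zero]
  obtain ⟨hxa, hyb⟩ := (add_eq_add_iff_eq_and_eq (not_lt.mp hx) (not_lt.mp hy)).mp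
    (by rw [← map_add, ← map_add, hxy])
  exact absurd (by rw [m.toSyn.injective hxa, m.toSyn.injective hyb]) hne

end Semiring

def coeffSubring [Ring R] (A : Subring R) : Subring (MvPowerSeries σ R) where
  carrier := {f | ∀ e, coeff e f ∈ A}
  zero_mem' _ := by simp
  one_mem' e := by
    classical
    rw [coeff_one]
    split_ifs <;> simp
  add_mem' hf hg e := by rw [map_add]; exact add_mem (hf e) (hg e)
  neg_mem' hf e := by rw [map_neg]; exact neg_mem (hf e)
  mul_mem' hf hg e := by
    classical
    rw [coeff_mul]
    exact sum_mem fun x _ => mul_mem (hf x.1) (hg x.2)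

theorem mem_coeffSubring [Ring R] {A : Subring R} {f : MvPowerSeries σ R} :
    f ∈ coeffSubring A ↔ ∀ e, coeff e f ∈ A :=
  Iff.rfl

variable [CommRing R] (m : MonomialOrder σ)

theorem coeff_eval_eq_of_coeff_sub_eq_zero {Q : (MvPowerSeries σ R)[X]}
    {x y : MvPowerSeries σ R} {c e : σ →₀ ℕ} (hxy : ∀ d, d ≼[m] c → coeff d (x - y) = 0)
    (he : e ≼[m] c) : coeff e (Q.eval x) = coeff e (Q.eval y) := by
  obtain ⟨r, hr⟩ := sub_dvd_eval_sub x y Q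
  rw [← sub_eq_zero, ← map_sub, hr, mul_comm]
  exact coeff_mul_eq_zero_of_le m hxy he

/-- First-order Taylor expansion of `Q` at `y`: the remainder, a multiple of `(x - y) ^ 2`,
has no `x^(c + I)` term. -/
theorem coeff_add_eval_eq {Q : (MvPowerSeries σ R)[X]} {x y : MvPowerSeries σ R}
    {c I : σ →₀ ℕ} (hc : ∀ d, d ≺[m] c → coeff d (Q.derivative.eval x) = 0)
    (hxyc : ∀ d, d ≼[m] c → coeff d (x - y) = 0) (hxyI : ∀ d, d ≺[m] I → coeff d (x - y) = 0) :
    coeff (c + I) (Q.eval x) =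
      coeff (c + I) (Q.eval y) + coeff c (Q.derivative.eval x) * coeff I (x - y) := by
  obtain ⟨r, hr⟩ := binomExpansion Q y (x - y)
  rw [add_sub_cancel] at hr
  have hder : ∀ d, d ≼[m] c →
      coeff d (Q.derivative.eval y) = coeff d (Q.derivative.eval x) :=
    fun d hd => (coeff_eval_eq_of_coeff_sub_eq_zero m hxyc hd).symm
  have hsq : coeff (c + I) (r * (x - y) ^ 2) = 0 :=
    coeff_mul_eq_zero_of_le m (fun d hd => by
      rw [sq]; exact coeff_mul_eq_zero_of_lt_of_le m hxyI hxyc (by rwa [add_comm])) le_rfl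
  rw [hr, map_add, map_add, hsq, add_zero,
    coeff_add_mul_of_lt m (fun d hd => (hder d hd.le).trans (hc d hd)) hxyI, hder c le_rfl]

theorem coeff_mem_of_eval_eq_zero {A : Subring R} {Q : (MvPowerSeries σ R)[X]}
    (hQ : ∀ i, Q.coeff i ∈ coeffSubring A) {φ : MvPowerSeries σ R} (hφ : Q.eval φ = 0)
    {c : σ →₀ ℕ} (hc : ∀ d, d ≺[m] c → coeff d (Q.derivative.eval φ) = 0) {u : R}
    (hu : u * coeff c (Q.derivative.eval φ) = 1) (huA : u ∈ A)
    (hφc : ∀ d, d ≼[m] c → coeff d φ ∈ A) (I : σ →₀ ℕ) : coeff I φ ∈ A := by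
  induction I using (InvImage.wf m.toSyn wellFounded_lt).induction with
  | _ I ih =>
  by_cases hIc : I ≼[m] c
  · exact hφc I hIc
  obtain ⟨ψ, hψ⟩ : ∃ ψ : MvPowerSeries σ R,
      ∀ d, coeff d ψ = if d ≺[m] I then coeff d φ else 0 :=
    ⟨fun d => if d ≺[m] I then coeff d φ else 0, fun _ => rfl⟩
  have hψA : ψ ∈ coeffSubring A := mem_coeffSubring.mpr fun d => by
    rw [hψ]
    split_ifs with h
    exacts [ih d h, A.zero_mem]
  have hsub : ∀ d, coeff d (φ - ψ) = if d ≺[m] I then 0 else coeff d φ := fun d => by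
    rw [map_sub, hψ]
    split_ifs <;> simp
  have key := coeff_add_eval_eq m hc
    (fun d hd => by rw [hsub, if_pos (hd.trans_lt (not_le.mp hIc))])
    (fun d hd => by rw [hsub, if_pos hd])
  rw [hφ, map_zero, hsub, if_neg (lt_irrefl _)] at key
  have hI : coeff I φ = -(u * coeff (c + I) (Q.eval ψ)) := by
    linear_combination (-u) * key - coeff I φ * hu
  rw [hI]
  exact A.neg_mem (A.mul_mem huA (eval_mem_of_coeff_mem hQ hψA (c + I)))

end MvPowerSeries

/-- If a formal power series `φ` over a field `k` of characteristic zero is algebraic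
over `k(x_1,…,x_n)` (i.e. annihilated by a nonzero polynomial with coefficients in
`k[x_1,…,x_n]`), then all coefficients of `φ` lie in a finitely generated
`ℤ`-subalgebra of `k`. -/
theorem stmt_0 {k : Type*} [Field k] [CharZero k] {n : ℕ}
    (φ : MvPowerSeries (Fin n) k)
    (F : Polynomial (MvPolynomial (Fin n) k))
    (hF : F ≠ 0)
    (hroot : Polynomial.eval φ (F.map (MvPolynomial.coeToMvPowerSeries.ringHom)) = 0) :
    ∃ A : Subalgebra ℤ k, A.FG ∧ ∀ I : Fin n →₀ ℕ, MvPowerSeries.coeff I φ ∈ A := by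
  classical
  obtain ⟨G, hGφ, hG'φ⟩ := exists_eval_map_eq_zero_and_eval_derivative_ne_zero
    (MvPolynomial.coe_injective _ _) hF hroot
  obtain ⟨c, hu, hc⟩ := MvPowerSeries.exists_coeff_ne_zero_forall_lt degLex hG'φ
  set u :=
    MvPowerSeries.coeff c ((G.map MvPolynomial.coeToMvPowerSeries.ringHom).derivative.eval φ)
  set S : Set k := (G.coeffs.biUnion MvPolynomial.coeffs : Set k) ∪
    (fun d => MvPowerSeries.coeff d φ) '' {d | d ≼[degLex] c} ∪ {u⁻¹}
  refine ⟨Algebra.adjoin ℤ S, Subalgebra.fg_def.mpr ⟨S, ?_, rfl⟩,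
    MvPowerSeries.coeff_mem_of_eval_eq_zero (A := (Algebra.adjoin ℤ S).toSubring) degLex
      (fun i => MvPowerSeries.mem_coeffSubring.mpr fun e => ?_) hGφ
      hc (inv_mul_cancel₀ hu) (Algebra.subset_adjoin (Or.inr rfl))
      (fun d hd => Algebra.subset_adjoin (Or.inl (Or.inr ⟨d, hd, rfl⟩)))⟩
  · exact ((Finset.finite_toSet _).union ((finite_setOf_degLex_le c).image _)).union
      (Set.finite_singleton _)
  · rw [coeff_map, MvPolynomial.coeToMvPowerSeries.ringHom_apply, MvPolynomial.coeff_coe]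
    by_cases he : (G.coeff i).coeff e = 0
    · rw [he]; exact zero_mem _
    have hi : G.coeff i ≠ 0 := fun h => he (by rw [h, MvPolynomial.coeff_zero])
    exact Algebra.subset_adjoin (Or.inl (Or.inl (Finset.mem_biUnion.mpr
      ⟨_, coeff_mem_coeffs hi, MvPolynomial.coeff_mem_coeffs _ he⟩)))
end

section
/- Let $K$ be a number field with a finite place $\mathfrak{p}$, completion $K_{\mathfrak{p}}$, and valuation ring $\mathcal{O}_{\mathfrak{p}}$. Let $(a_i)_{i \ge 1}$ be a sequence in $K_{\mathfrak{p}}$ tending to $0$, not all zero, and let $(b_i)_{i \ge 1}$ be a sequence of pairwise distinct units in $\mathcal{O}_{\mathfrak{p}}^{\times}$. Then the set of natural numbers $s$ with $\sum_{i \ge 1} a_i b_i^s = 0$ cannot be all of $\mathbb{N}$; that is, there exists $s \in \mathbb{N}$ with $\sum_{i \ge 1} a_i b_i^s \ne 0$. -/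
open IsUltrametricDist

section Aux

variable {K : Type*} [NontriviallyNormedField K] [IsUltrametricDist K]

/-- Powers of a norm-one element close to 1 stay close to 1. -/
lemma pow_close_one {z : K} (hz : ‖z‖ = 1) {ε : ℝ} (h : ‖z - 1‖ ≤ ε) :
    ∀ l : ℕ, ‖z ^ l - 1‖ ≤ ε := by
  intro l
  induction l with
  | zero => simpa using (norm_nonneg (z - 1)).trans h
  | succ n ih =>
      have key : z ^ (n + 1) - 1 = z ^ n * (z - 1) + (z ^ n - 1) := by ring
      rw [key]
      refine (norm_add_le_max _ _).trans (max_le ?_ ih)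
      rw [norm_mul, norm_pow, hz, one_pow, one_mul]
      exact h

/-- Uniform exponent lemma: there is a positive `n` such that `‖y^(k*n) - 1‖ ≤ ε`
for every norm-one `y` and every `k`. -/
lemma exists_exponent [ProperSpace K] {ε : ℝ} (hε : 0 < ε) :
    ∃ n : ℕ, 0 < n ∧ ∀ y : K, ‖y‖ = 1 → ∀ k : ℕ, ‖y ^ (k * n) - 1‖ ≤ ε := by
  have hcov : Metric.sphere (0 : K) 1 ⊆ ⋃ y : K, Metric.ball y ε := fun y _ =>
    Set.mem_iUnion.2 ⟨y, Metric.mem_ball_self hε⟩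
  obtain ⟨t, ht⟩ := (isCompact_sphere (0 : K) 1).elim_finite_subcover
    (fun y : K => Metric.ball y ε) (fun _ => Metric.isOpen_ball) hcov
  refine ⟨t.card.factorial, t.card.factorial_pos, ?_⟩
  intro y hy k
  have hmem : ∀ j : ℕ, ∃ c, c ∈ t ∧ y ^ j ∈ Metric.ball c ε := by
    intro j
    have hyj : y ^ j ∈ Metric.sphere (0 : K) 1 := by
      simp [norm_pow, hy]
    have := ht hyj
    simp only [Set.mem_iUnion, exists_prop] at this
    exact this
  choose c hct hcball using hmem
  have key : ∀ p q : ℕ, p < q → q ≤ t.card → c p = c q →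
      ∃ d : ℕ, 1 ≤ d ∧ d ≤ t.card ∧ ‖y ^ d - 1‖ ≤ ε := by
    intro p q hpq hq hcc
    refine ⟨q - p, Nat.sub_pos_of_lt hpq, le_trans (Nat.sub_le q p) hq, ?_⟩
    have h1 : dist (y ^ p) (y ^ q) < ε := by
      refine lt_of_le_of_lt (_root_.dist_triangle_max (y ^ p) (c p) (y ^ q)) (max_lt ?_ ?_)
      · exact Metric.mem_ball.mp (hcball p)
      · rw [hcc, dist_comm]
        exact Metric.mem_ball.mp (hcball q)
    have h2 : y ^ q - y ^ p = y ^ p * (y ^ (q - p) - 1) := by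
      rw [mul_sub, mul_one, ← pow_add, Nat.add_sub_cancel' hpq.le]
    have h3 : ‖y ^ (q - p) - 1‖ = dist (y ^ p) (y ^ q) := by
      rw [dist_comm, dist_eq_norm, h2, norm_mul, norm_pow, hy, one_pow, one_mul]
    rw [h3]
    exact h1.le
  obtain ⟨j, hj, j', hj', hne, hcc⟩ :=
    Finset.exists_ne_map_eq_of_card_lt_of_maps_to
      (s := Finset.range (t.card + 1)) (t := t)
      (by simp) (fun j _ => hct j)
  rw [Finset.mem_range] at hj hj'
  have hd : ∃ d : ℕ, 1 ≤ d ∧ d ≤ t.card ∧ ‖y ^ d - 1‖ ≤ ε := by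
    rcases lt_or_gt_of_ne hne with hlt | hlt
    · exact key j j' hlt (by omega) hcc
    · exact key j' j hlt (by omega) hcc.symm
  obtain ⟨d, hd1, hdm, hdε⟩ := hd
  have hdvd : d ∣ t.card.factorial := Nat.dvd_factorial hd1 hdm
  have heq : k * t.card.factorial = d * (k * (t.card.factorial / d)) := by
    rw [mul_comm d, mul_assoc, Nat.div_mul_cancel hdvd]
  rw [heq, pow_mul]
  refine pow_close_one ?_ hdε _
  rw [norm_pow, hy, one_pow]

/-- On a compact set, the norm values `‖x - z‖` that are at least `γ` form a finite set. -/
lemma finite_norm_values {C : Set K} (hC : IsCompact C) (z : K) {γ : ℝ} (hγ : 0 < γ) :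
    ∃ D : Finset ℝ, ∀ x ∈ C, γ ≤ ‖x - z‖ → ‖x - z‖ ∈ D := by
  obtain ⟨t, htfin, hcov⟩ := (Metric.totallyBounded_iff.mp hC.totallyBounded) γ hγ
  refine ⟨htfin.toFinset.image (fun y => ‖y - z‖), ?_⟩
  intro x hx hγx
  have hx' := hcov hx
  simp only [Set.mem_iUnion, exists_prop] at hx'
  obtain ⟨y, hyt, hxy⟩ := hx'
  have h1 : ‖y - x‖ < ‖x - z‖ := by
    refine lt_of_lt_of_le ?_ hγx
    rw [← dist_eq_norm, dist_comm]
    exact Metric.mem_ball.mp hxy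
  have h2 : ‖y - z‖ = ‖x - z‖ := by
    have h3 : y - z = (y - x) + (x - z) := by ring
    rw [h3, norm_add_eq_max_of_norm_ne_norm (ne_of_lt h1)]
    exact max_eq_right h1.le
  rw [← h2]
  exact Finset.mem_image_of_mem _ (htfin.mem_toFinset.mpr hyt)

/-- Gap lemma: below a positive radius `R`, the norm values on a compact set
stay uniformly below `R`. -/
lemma exists_gap {C : Set K} (hC : IsCompact C) (z : K) {R : ℝ} (hR : 0 < R) :
    ∃ R' : ℝ, 0 ≤ R' ∧ R' < R ∧ ∀ x ∈ C, ‖x - z‖ < R → ‖x - z‖ ≤ R' := by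
  obtain ⟨D, hD⟩ := finite_norm_values hC z (half_pos hR)
  classical
  set E := D.filter (fun u => u < R) with hE
  have hFne : (insert (R/2) E).Nonempty := ⟨R/2, Finset.mem_insert_self _ _⟩
  refine ⟨(insert (R/2) E).max' hFne, ?_, ?_, ?_⟩
  · refine le_trans (by linarith) ((insert (R/2) E).le_max' _ (Finset.mem_insert_self _ _))
  · rw [Finset.max'_lt_iff]
    intro u hu
    rcases Finset.mem_insert.mp hu with h | h
    · rw [h]; linarith
    · exact (Finset.mem_filter.mp h).2
  · intro x hx hxR
    by_cases hhalf : R/2 ≤ ‖x - z‖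
    · exact (insert (R/2) E).le_max' _
        (Finset.mem_insert_of_mem (Finset.mem_filter.mpr ⟨hD x hx hhalf, hxR⟩))
    · exact le_trans (not_le.mp hhalf).le
        ((insert (R/2) E).le_max' _ (Finset.mem_insert_self _ _))

/-- Polynomial approximation of indicator functions of balls on compact sets,
in an ultrametric proper field. -/
lemma indicator_approx [ProperSpace K] (N : ℕ) :
    ∀ (C : Set K), IsCompact C → ∀ (z : K) (r : ℝ), 0 < r →
    ∀ (D : Finset ℝ), D.card ≤ N → (∀ x ∈ C, r ≤ ‖x - z‖ → ‖x - z‖ ∈ D) →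
    ∀ ε : ℝ, 0 < ε → ∃ P : Polynomial K, ∀ x ∈ C,
      ‖Polynomial.eval x P - (if ‖x - z‖ < r then (1:K) else 0)‖ ≤ ε := by
  induction N with
  | zero =>
      intro C hC z r hr D hD hDmem ε hε
      refine ⟨1, fun x hx => ?_⟩
      have hxr : ‖x - z‖ < r := by
        by_contra hcon
        have hmem := hDmem x hx (not_lt.mp hcon)
        rw [Finset.card_eq_zero.mp (Nat.le_zero.mp hD)] at hmem
        simp at hmem
      rw [if_pos hxr]
      simpa using hε.le
  | succ n ih =>
      intro C hC z r hr D hD hDmem ε hε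
      by_cases hall : ∀ x ∈ C, ‖x - z‖ < r
      · exact ⟨1, fun x hx => by rw [if_pos (hall x hx)]; simpa using hε.le⟩
      push_neg at hall
      obtain ⟨x₀, hx₀C, hx₀r⟩ := hall
      have hDne : D.Nonempty := ⟨_, hDmem x₀ hx₀C hx₀r⟩
      set R := D.max' hDne with hRdef
      have hRr : r ≤ R := le_trans hx₀r (D.le_max' _ (hDmem x₀ hx₀C hx₀r))
      have hRpos : 0 < R := lt_of_lt_of_le hr hRr
      have hCle : ∀ x ∈ C, ‖x - z‖ ≤ R := by
        intro x hx
        by_cases hcase : r ≤ ‖x - z‖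
        · exact D.le_max' _ (hDmem x hx hcase)
        · linarith [not_le.mp hcase]
      have hcard : (D.erase R).card ≤ n := by
        rw [Finset.card_erase_of_mem (D.max'_mem hDne)]
        omega
      by_cases hsph : ∃ xs ∈ C, ‖xs - z‖ = R
      · obtain ⟨xs, hxsC, hxsR⟩ := hsph
        have hcnorm : ‖xs - z‖ = R := hxsR
        obtain ⟨R', hR'0, hR'R, hR'⟩ := exists_gap hC z hRpos
        set C₂ := C ∩ {x : K | ‖x - z‖ ≤ R'} with hC₂def
        have hC₂ : IsCompact C₂ := by
          refine hC.inter_right ?_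
          have hset : {x : K | ‖x - z‖ ≤ R'} = (fun x : K => ‖x - z‖) ⁻¹' Set.Iic R' := rfl
          rw [hset]
          exact IsClosed.preimage (by continuity) isClosed_Iic
        have hmem₂ : ∀ x ∈ C₂, r ≤ ‖x - z‖ → ‖x - z‖ ∈ D.erase R := by
          intro x hx hrx
          refine Finset.mem_erase.mpr ⟨?_, hDmem x hx.1 hrx⟩
          have hle : ‖x - z‖ ≤ R' := hx.2
          intro hcon
          rw [hcon] at hle
          linarith
        obtain ⟨Q, hQ⟩ := ih C₂ hC₂ z r hr (D.erase R) hcard hmem₂ ε hε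
        obtain ⟨M₀, hM₀⟩ := hC.exists_bound_of_continuousOn (Q.continuous).continuousOn
        set M := max M₀ 1 with hMdef
        have hM1 : (1:ℝ) ≤ M := le_max_right _ _
        have hMpos : (0:ℝ) < M := lt_of_lt_of_le one_pos hM1
        have hQbd : ∀ x ∈ C, ‖Polynomial.eval x Q‖ ≤ M :=
          fun x hx => le_trans (hM₀ x hx) (le_max_left _ _)
        set ε₁ := ε / M with hε₁def
        have hε₁ : 0 < ε₁ := div_pos hε hMpos
        have hε₁M : ε₁ * M = ε := by
          rw [hε₁def]
          field_simp
        set θ := R' / R with hθdef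
        have hθ0 : 0 ≤ θ := div_nonneg hR'0 hRpos.le
        have hθ1 : θ < 1 := (div_lt_one hRpos).mpr hR'R
        obtain ⟨n₀, hn₀pos, hn₀⟩ := exists_exponent (K := K) hε₁
        obtain ⟨j, hj⟩ := exists_pow_lt_of_lt_one hε₁ hθ1
        set N' := (j + 1) * n₀ with hN'def
        have hjN' : j ≤ N' := by
          calc j ≤ j + 1 := by omega
            _ ≤ (j + 1) * n₀ := Nat.le_mul_of_pos_right _ hn₀pos
        have hθN' : θ ^ N' ≤ ε₁ := le_trans (pow_le_pow_of_le_one hθ0 hθ1.le hjN') hj.le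
        have hcne : xs - z ≠ 0 := by
          intro h
          rw [h, norm_zero] at hcnorm
          linarith
        set G : Polynomial K :=
          1 - (Polynomial.C (xs - z)⁻¹ * (Polynomial.X - Polynomial.C z)) ^ N' with hGdef
        have hGeval : ∀ x : K, Polynomial.eval x G = 1 - ((xs - z)⁻¹ * (x - z)) ^ N' := by
          intro x
          simp [hGdef]
        have hunorm : ∀ x : K, ‖(xs - z)⁻¹ * (x - z)‖ = ‖x - z‖ / R := by
          intro x
          rw [norm_mul, norm_inv, hcnorm, inv_mul_eq_div]
        have hG : ∀ x ∈ C,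
            ‖Polynomial.eval x G - (if ‖x - z‖ < R then (1:K) else 0)‖ ≤ ε₁ := by
          intro x hx
          by_cases hxR : ‖x - z‖ < R
          · rw [if_pos hxR, hGeval]
            have hxle : ‖x - z‖ ≤ R' := hR' x hx hxR
            have hu : ‖(xs - z)⁻¹ * (x - z)‖ ≤ θ := by
              rw [hunorm, hθdef]
              gcongr
            have h5 : (1:K) - ((xs - z)⁻¹ * (x - z)) ^ N' - 1
                = -(((xs - z)⁻¹ * (x - z)) ^ N') := by ring
            rw [h5, norm_neg, norm_pow]
            calc ‖(xs - z)⁻¹ * (x - z)‖ ^ N' ≤ θ ^ N' :=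
                  pow_le_pow_left₀ (norm_nonneg _) hu N'
              _ ≤ ε₁ := hθN'
          · rw [if_neg hxR, sub_zero, hGeval]
            have hxeq : ‖x - z‖ = R := le_antisymm (hCle x hx) (not_lt.mp hxR)
            have hu1 : ‖(xs - z)⁻¹ * (x - z)‖ = 1 := by
              rw [hunorm, hxeq, div_self hRpos.ne']
            have h6 := hn₀ ((xs - z)⁻¹ * (x - z)) hu1 (j + 1)
            rw [← hN'def] at h6
            calc ‖(1:K) - ((xs - z)⁻¹ * (x - z)) ^ N'‖
                = ‖((xs - z)⁻¹ * (x - z)) ^ N' - 1‖ := norm_sub_rev _ _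
              _ ≤ ε₁ := h6
        refine ⟨G * Q, fun x hx => ?_⟩
        by_cases hxR : ‖x - z‖ < R
        · have hxC₂ : x ∈ C₂ := ⟨hx, hR' x hx hxR⟩
          have hQx := hQ x hxC₂
          have hGx : ‖Polynomial.eval x G - 1‖ ≤ ε₁ := by
            have h7 := hG x hx
            rw [if_pos hxR] at h7
            exact h7
          have key : Polynomial.eval x (G * Q) - (if ‖x - z‖ < r then (1:K) else 0)
              = (Polynomial.eval x G - 1) * Polynomial.eval x Q
                + (Polynomial.eval x Q - (if ‖x - z‖ < r then (1:K) else 0)) := by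
            rw [Polynomial.eval_mul]
            ring
          rw [key]
          refine (norm_add_le_max _ _).trans (max_le ?_ hQx)
          rw [norm_mul]
          calc ‖Polynomial.eval x G - 1‖ * ‖Polynomial.eval x Q‖ ≤ ε₁ * M :=
                mul_le_mul hGx (hQbd x hx) (norm_nonneg _) hε₁.le
            _ = ε := hε₁M
        · have hrx : ¬ (‖x - z‖ < r) := by
            have hxeq : ‖x - z‖ = R := le_antisymm (hCle x hx) (not_lt.mp hxR)
            rw [hxeq]
            exact not_lt.mpr hRr
          rw [if_neg hrx, sub_zero, Polynomial.eval_mul, norm_mul]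
          have hGx : ‖Polynomial.eval x G‖ ≤ ε₁ := by
            have h8 := hG x hx
            rw [if_neg hxR, sub_zero] at h8
            exact h8
          calc ‖Polynomial.eval x G‖ * ‖Polynomial.eval x Q‖ ≤ ε₁ * M :=
                mul_le_mul hGx (hQbd x hx) (norm_nonneg _) hε₁.le
            _ = ε := hε₁M
      · refine ih C hC z r hr (D.erase R) hcard ?_ ε hε
        intro x hx hrx
        exact Finset.mem_erase.mpr ⟨fun hcon => hsph ⟨x, hx, hcon⟩, hDmem x hx hrx⟩

/-- In a complete ultrametric field, a sequence tending to zero is summable. -/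
lemma summable_of_tendsto_zero [CompleteSpace K] {f : ℕ → K}
    (hf : Filter.Tendsto f Filter.atTop (nhds 0)) : Summable f := by
  rw [summable_iff_vanishing]
  intro e he
  obtain ⟨ε, hε, hball⟩ := Metric.mem_nhds_iff.mp he
  obtain ⟨N, hN⟩ := Metric.tendsto_atTop.mp hf (ε/2) (by linarith)
  refine ⟨Finset.range N, fun t ht => ?_⟩
  apply hball
  rw [Metric.mem_ball, dist_zero_right]
  refine lt_of_le_of_lt (norm_sum_le_of_forall_le_of_nonneg (C := ε/2) (by linarith) ?_) (by linarith)
  intro i hi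
  have hiN : N ≤ i := by
    by_contra hcon
    exact (Finset.disjoint_left.mp ht hi) (Finset.mem_range.mpr (not_le.mp hcon))
  have h9 := hN i hiN
  rw [dist_zero_right] at h9
  exact h9.le

end Aux

/-- In a nonarchimedean local field of characteristic zero (a complete, nontrivially
normed, ultrametric, locally compact field), if `a i → 0` with not all `a i` zero and
the `b i` are pairwise distinct units of the valuation ring (`‖b i‖ = 1`), then
`∑ a i * b i ^ s` is nonzero for some natural number `s`. -/
theorem stmt_1 {K : Type*} [NontriviallyNormedField K] [CompleteSpace K]
    [IsUltrametricDist K] [CharZero K] [ProperSpace K]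
    (a : ℕ → K) (ha : Filter.Tendsto a Filter.atTop (nhds 0))
    (hne : ∃ i, a i ≠ 0)
    (b : ℕ → K) (hb : ∀ i, ‖b i‖ = 1) (hbinj : Function.Injective b) :
    ∃ s : ℕ, (∑' i : ℕ, a i * b i ^ s) ≠ 0 := by
  by_contra hcon
  push_neg at hcon
  obtain ⟨i0, hi0⟩ := hne
  classical
  have hnorm_tendsto : Filter.Tendsto (fun i => ‖a i‖) Filter.atTop (nhds 0) := by
    simpa using ha.norm
  obtain ⟨A₀, hA₀⟩ := hnorm_tendsto.bddAbove_range
  have hA₀le : ∀ i, ‖a i‖ ≤ A₀ := fun i => hA₀ ⟨i, rfl⟩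
  set A := max A₀ 1 with hAdef
  have hApos : (0:ℝ) < A := lt_of_lt_of_le one_pos (le_max_right _ _)
  have hAle : ∀ i, ‖a i‖ ≤ A := fun i => le_trans (hA₀le i) (le_max_left _ _)
  have hbmem : ∀ i, b i ∈ Metric.sphere (0:K) 1 := by
    intro i
    simp [Metric.mem_sphere, dist_zero_right, hb i]
  have hsum : ∀ s : ℕ, Summable (fun i => a i * b i ^ s) := by
    intro s
    apply summable_of_tendsto_zero
    refine squeeze_zero_norm ?_ hnorm_tendsto
    intro i
    rw [norm_mul, norm_pow, hb i, one_pow, mul_one]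
  have hpoly : ∀ P : Polynomial K, ∑' i, a i * Polynomial.eval (b i) P = 0 := by
    intro P
    have h1 : ∀ i, a i * Polynomial.eval (b i) P
        = ∑ s ∈ Finset.range (P.natDegree + 1), P.coeff s * (a i * b i ^ s) := by
      intro i
      rw [Polynomial.eval_eq_sum_range, Finset.mul_sum]
      exact Finset.sum_congr rfl (fun s _ => by ring)
    calc ∑' i, a i * Polynomial.eval (b i) P
        = ∑' i, ∑ s ∈ Finset.range (P.natDegree + 1), P.coeff s * (a i * b i ^ s) :=
          tsum_congr h1
      _ = ∑ s ∈ Finset.range (P.natDegree + 1), ∑' i, P.coeff s * (a i * b i ^ s) :=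
          Summable.tsum_finsetSum (fun s _ => (hsum s).mul_left _)
      _ = 0 := Finset.sum_eq_zero (fun s _ => by rw [tsum_mul_left, hcon s, mul_zero])
  have hsumT : ∀ ρ : ℝ,
      Summable (fun i => a i * (if ‖b i - b i0‖ < ρ then (1:K) else 0)) := by
    intro ρ
    apply summable_of_tendsto_zero
    refine squeeze_zero_norm ?_ hnorm_tendsto
    intro i
    rw [norm_mul]
    by_cases h : ‖b i - b i0‖ < ρ <;> simp [h]
  have hkey : ∀ ρ : ℝ, 0 < ρ →
      (∑' i, a i * (if ‖b i - b i0‖ < ρ then (1:K) else 0)) = 0 := by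
    intro ρ hρ
    set S := ∑' i, a i * (if ‖b i - b i0‖ < ρ then (1:K) else 0) with hSdef
    have hbound : ∀ η : ℝ, 0 < η → ‖S‖ ≤ η := by
      intro η hη
      obtain ⟨D, hD⟩ := finite_norm_values (isCompact_sphere (0:K) 1) (b i0) hρ
      have hε' : 0 < η / A := div_pos hη hApos
      obtain ⟨P, hP⟩ := indicator_approx D.card (Metric.sphere (0:K) 1)
        (isCompact_sphere _ _) (b i0) ρ hρ D le_rfl hD (η / A) hε'
      have hsumP : Summable (fun i => a i * Polynomial.eval (b i) P) := by
        obtain ⟨MP, hMP⟩ := (isCompact_sphere (0:K) 1).exists_bound_of_continuousOn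
          (P.continuous).continuousOn
        apply summable_of_tendsto_zero
        have hgt : Filter.Tendsto (fun i => ‖a i‖ * MP) Filter.atTop (nhds 0) := by
          simpa using hnorm_tendsto.mul_const MP
        refine squeeze_zero_norm ?_ hgt
        intro i
        rw [norm_mul]
        exact mul_le_mul_of_nonneg_left (hMP (b i) (hbmem i)) (norm_nonneg _)
      have hS2 : (∑' i, a i * ((if ‖b i - b i0‖ < ρ then (1:K) else 0)
          - Polynomial.eval (b i) P)) = S := by
        have hfe : (fun i => a i * ((if ‖b i - b i0‖ < ρ then (1:K) else 0)
            - Polynomial.eval (b i) P))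
            = fun i => a i * (if ‖b i - b i0‖ < ρ then (1:K) else 0)
              - a i * Polynomial.eval (b i) P := funext fun i => by ring
        rw [hfe, Summable.tsum_sub (hsumT ρ) hsumP, hpoly P, sub_zero]
      rw [← hS2]
      refine norm_tsum_le_of_forall_le ?_
      intro i
      rw [norm_mul]
      have hdiff : ‖(if ‖b i - b i0‖ < ρ then (1:K) else 0)
          - Polynomial.eval (b i) P‖ ≤ η / A := by
        rw [norm_sub_rev]
        exact hP (b i) (hbmem i)
      calc ‖a i‖ * ‖(if ‖b i - b i0‖ < ρ then (1:K) else 0) - Polynomial.eval (b i) P‖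
          ≤ A * (η / A) := mul_le_mul (hAle i) hdiff (norm_nonneg _) hApos.le
        _ = η := by field_simp
    by_contra hS0
    have hpos : 0 < ‖S‖ := norm_pos_iff.mpr hS0
    have := hbound (‖S‖ / 2) (by linarith)
    linarith
  have hfinal : ∀ ε : ℝ, 0 < ε → ‖a i0‖ ≤ ε := by
    intro ε hε
    obtain ⟨N, hN⟩ := Metric.tendsto_atTop.mp ha ε hε
    set Fs := ((Finset.range N).erase i0).image (fun i => ‖b i - b i0‖) with hFs
    have hins : ((insert (1:ℝ) Fs)).Nonempty := ⟨1, Finset.mem_insert_self _ _⟩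
    set ρ := (insert (1:ℝ) Fs).min' hins with hρdef
    have hρpos : 0 < ρ := by
      rw [hρdef]
      refine (Finset.lt_min'_iff _ _).mpr ?_
      intro u hu
      rcases Finset.mem_insert.mp hu with h | h
      · rw [h]; norm_num
      · obtain ⟨i, hi, rfl⟩ := Finset.mem_image.mp h
        have hne' : b i ≠ b i0 := fun hcon2 => (Finset.mem_erase.mp hi).1 (hbinj hcon2)
        exact norm_pos_iff.mpr (sub_ne_zero.mpr hne')
    have h0 := hkey ρ hρpos
    have hfs := hsumT ρ
    rw [Summable.tsum_eq_add_tsum_ite hfs i0] at h0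
    have hi0term : a i0 * (if ‖b i0 - b i0‖ < ρ then (1:K) else 0) = a i0 := by
      rw [if_pos (by rw [sub_self, norm_zero]; exact hρpos), mul_one]
    rw [hi0term] at h0
    have hform : a i0 = - ∑' i, (if i = i0 then 0
        else a i * (if ‖b i - b i0‖ < ρ then (1:K) else 0)) :=
      eq_neg_of_add_eq_zero_left h0
    rw [hform, norm_neg]
    refine norm_tsum_le_of_forall_le ?_
    intro i
    by_cases hii : i = i0
    · rw [if_pos hii, norm_zero]
      exact hε.le
    · rw [if_neg hii]
      by_cases hball : ‖b i - b i0‖ < ρ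
      · rw [if_pos hball, mul_one]
        have hiN : N ≤ i := by
          by_contra hcon2
          have himem : i ∈ (Finset.range N).erase i0 :=
            Finset.mem_erase.mpr ⟨hii, Finset.mem_range.mpr (not_le.mp hcon2)⟩
          have hmem' : ‖b i - b i0‖ ∈ Fs := Finset.mem_image_of_mem _ himem
          have hle := (insert (1:ℝ) Fs).min'_le _ (Finset.mem_insert_of_mem hmem')
          rw [← hρdef] at hle
          linarith
        have h10 := hN i hiN
        rw [dist_zero_right] at h10
        exact h10.le
      · rw [if_neg hball, mul_zero, norm_zero]
        exact hε.le
  have hle0 : ‖a i0‖ ≤ 0 := by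
    by_contra hcon2
    push_neg at hcon2
    have := hfinal (‖a i0‖ / 2) (by linarith)
    linarith
  exact hi0 (norm_le_zero_iff.mp hle0)
end

section
/- Let $p$ be a prime, and let $g : \mathbb{Z}_p \to \mathbb{Q}_p$ be an analytic function (given by a power series converging on $\mathbb{Z}_p$). For any $s_0 \in \mathbb{Z}_p$ and any $m \ge 1$, if $(j_1, \dots, j_m)$ ranges over $m$-tuples of pairwise distinct elements of $\mathbb{Z}_p$ all converging to $s_0$, then $\frac{g^{(m-1)}(s_0)}{(m-1)!} = \lim \sum_{l=1}^{m} \frac{g(j_l)}{\prod_{k \ne l} (j_l - j_k)}$ (Newton interpolation formula: divided differences of an analytic function converge to the corresponding Taylor coefficient). -/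
/-!
By linearity, the divided difference of `g = ∑ cₙ xⁿ` over the points `j₁, …, jₘ` is
`∑ cₙ · Δₙ`, where `Δₙ` is the divided difference of `xⁿ`. Interpolating `xⁿ` shows that
`Δₙ` is `0` for `n < m - 1` and `1` for `n = m - 1`, and removing one point `a` gives
`Δₙ₊₁(S) = a · Δₙ(S) + Δₙ(S \ {a})`. This recursion mirrors Pascal's rule, and in the
ultrametric setting it propagates the bound `‖Δₙ - (n choose (m-1)) s₀^(n-m+1)‖ ≤ δ` for points
of `ℤ_p` within `δ` of `s₀`. Since the `cₙ` are bounded, the whole series is then within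
`(sup ‖cₙ‖) · δ` of the Taylor coefficient.
-/

open Finset Filter Polynomial Topology

section DividedDifference

variable {ι F : Type*} [DecidableEq ι]

def dividedDiffPow [Field F] (s : Finset ι) (v : ι → F) (n : ℕ) : F :=
  ∑ i ∈ s, v i ^ n / ∏ j ∈ s.erase i, (v i - v j)

variable [Field F] {s : Finset ι} {v : ι → F}

theorem dividedDiffPow_of_lt_card (hv : Set.InjOn v s) {n : ℕ} (hn : n < #s) :
    dividedDiffPow s v n = if #s - 1 = n then 1 else 0 := by
  rw [← coeff_X_pow, Lagrange.coeff_eq_sum hv (by rw [degree_X_pow]; exact_mod_cast hn)]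
  simp only [dividedDiffPow, eval_pow, eval_X]

theorem dividedDiffPow_sub_choose_of_lt_card (hv : Set.InjOn v s) (s₀ : F) {n : ℕ}
    (hn : n < #s) : dividedDiffPow s v n - n.choose (#s - 1) * s₀ ^ (n - (#s - 1)) = 0 := by
  rw [dividedDiffPow_of_lt_card hv hn]
  split_ifs with h
  · simp [← h]
  · simp [Nat.choose_eq_zero_of_lt (by omega : n < #s - 1)]

theorem dividedDiffPow_insert_succ {a : ι} (ha : a ∉ s) (hv : Set.InjOn v (insert a s))
    (n : ℕ) : dividedDiffPow (insert a s) v (n + 1)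
      = v a * dividedDiffPow (insert a s) v n + dividedDiffPow s v n := by
  simp only [dividedDiffPow]
  rw [sum_insert ha, sum_insert ha, mul_add, mul_sum, add_assoc, ← sum_add_distrib,
    pow_succ', mul_div_assoc]
  congr 1
  refine sum_congr rfl fun i hi => ?_
  have hia : v i - v a ≠ 0 :=
    sub_ne_zero.2 fun h => ne_of_mem_of_not_mem hi ha (hv (by simp [hi]) (by simp) h)
  have hQ : ∏ j ∈ s.erase i, (v i - v j) ≠ 0 :=
    prod_ne_zero_iff.2 fun j hj => sub_ne_zero.2 fun h =>
      (ne_of_mem_erase hj).symm (hv (by simp [hi]) (by simp [mem_of_mem_erase hj]) h)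
  rw [erase_insert_of_ne (ne_of_mem_of_not_mem hi ha).symm,
    prod_insert fun h => ha (mem_of_mem_erase h)]
  field_simp
  ring

theorem hasSum_mul_dividedDiffPow [TopologicalSpace F] [IsTopologicalRing F] {c : ℕ → F}
    (hc : ∀ i ∈ s, Summable fun n => c n * v i ^ n) :
    HasSum (fun n => c n * dividedDiffPow s v n)
      (∑ i ∈ s, (∑' n, c n * v i ^ n) / ∏ j ∈ s.erase i, (v i - v j)) := by
  simp only [dividedDiffPow, mul_sum, ← mul_div_assoc]
  exact hasSum_sum fun i hi => (hc i hi).hasSum.div_const _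

end DividedDifference

section Ultrametric

variable {F : Type*} [NormedField F] [IsUltrametricDist F] {s₀ : F}

theorem norm_dividedDiffPow_sub_choose_le {ι : Type*} [DecidableEq ι] {s : Finset ι}
    {v : ι → F} {δ : ℝ} (hs₀ : ‖s₀‖ ≤ 1) (hv : Set.InjOn v s) (hv₁ : ∀ i ∈ s, ‖v i‖ ≤ 1)
    (hvδ : ∀ i ∈ s, ‖v i - s₀‖ ≤ δ) (hs : s.Nonempty) (n : ℕ) :
    ‖dividedDiffPow s v n - n.choose (#s - 1) * s₀ ^ (n - (#s - 1))‖ ≤ δ := by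
  have hδ : 0 ≤ δ := let ⟨i, hi⟩ := hs; (norm_nonneg _).trans (hvδ i hi)
  induction n generalizing s with
  | zero => rw [dividedDiffPow_sub_choose_of_lt_card hv _ (card_pos.2 hs), norm_zero]; exact hδ
  | succ n ih =>
    rcases lt_or_ge (n + 1) #s with hn | hn
    · rw [dividedDiffPow_sub_choose_of_lt_card hv _ hn, norm_zero]; exact hδ
    obtain ⟨a, ha⟩ := hs
    set T := s.erase a
    have hsT : s = insert a T := (insert_erase ha).symm
    have hk : #s - 1 = #T := by rw [card_erase_of_mem ha]
    have hnk : #T ≤ n := by omega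
    -- Pascal's rule splits the binomial coefficient between `s` and `T`.
    have hT : ‖dividedDiffPow T v n
        - (((n + 1).choose #T : F) - n.choose #T) * s₀ ^ (n + 1 - #T)‖ ≤ δ := by
      rcases T.eq_empty_or_nonempty with hT | ⟨b, hb⟩
      · simp [hT, dividedDiffPow, hδ]
      · obtain ⟨k, hTk⟩ : ∃ k, #T = k + 1 := ⟨#T - 1, by have := card_pos.2 ⟨b, hb⟩; omega⟩
        have := ih (hv.mono (erase_subset a s)) (fun i hi => hv₁ i (mem_of_mem_erase hi))
          (fun i hi => hvδ i (mem_of_mem_erase hi)) ⟨b, hb⟩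
        rw [hTk, Nat.add_sub_cancel] at this
        rwa [hTk, Nat.choose_succ_succ', Nat.cast_add, add_sub_cancel_right,
          show n + 1 - (k + 1) = n - k by omega]
    have hS := ih hv hv₁ hvδ ⟨a, ha⟩
    have hcoef : ‖(n.choose #T : F) * s₀ ^ (n - #T)‖ ≤ 1 := by
      rw [norm_mul, norm_pow]
      exact mul_le_one₀ (IsUltrametricDist.norm_natCast_le_one F _) (by positivity)
        (pow_le_one₀ (norm_nonneg _) hs₀)
    have hsplit : v a * dividedDiffPow s v n + dividedDiffPow T v n
          - ((n + 1).choose #T : F) * s₀ ^ (n + 1 - #T)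
        = v a * (dividedDiffPow s v n - n.choose #T * s₀ ^ (n - #T))
          + (v a - s₀) * (n.choose #T * s₀ ^ (n - #T))
          + (dividedDiffPow T v n
            - (((n + 1).choose #T : F) - n.choose #T) * s₀ ^ (n + 1 - #T)) := by
      rw [Nat.sub_add_comm hnk, pow_succ]; ring
    rw [hk] at hS ⊢
    rw [hsT, dividedDiffPow_insert_succ (notMem_erase a s) (by rw [← coe_insert, ← hsT]; exact hv),
      ← hsT, hsplit]
    refine (IsUltrametricDist.norm_add_le_max _ _).trans (max_le ?_ hT)
    refine (IsUltrametricDist.norm_add_le_max _ _).trans (max_le ?_ ?_)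
    · rw [norm_mul]
      exact (mul_le_mul (hv₁ a ha) hS (norm_nonneg _) zero_le_one).trans_eq (one_mul δ)
    · rw [norm_mul]
      exact (mul_le_mul (hvδ a ha) hcoef (norm_nonneg _) hδ).trans_eq (mul_one δ)

theorem summable_choose_mul_mul_pow [CompleteSpace F] {c : ℕ → F} (hc : Tendsto c atTop (𝓝 0))
    (hs₀ : ‖s₀‖ ≤ 1) (k : ℕ) : Summable fun n => (n.choose k : F) * c n * s₀ ^ (n - k) := by
  refine NonarchimedeanAddGroup.summable_of_tendsto_cofinite_zero ?_
  rw [Nat.cofinite_eq_atTop]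
  refine squeeze_zero_norm (fun n => ?_) (tendsto_zero_iff_norm_tendsto_zero.1 hc)
  rw [norm_mul, norm_mul, norm_pow]
  exact (mul_le_of_le_one_right (by positivity) (pow_le_one₀ (norm_nonneg _) hs₀)).trans
    (mul_le_of_le_one_left (norm_nonneg _) (IsUltrametricDist.norm_natCast_le_one F _))

end Ultrametric

/-- Newton interpolation formula, `p`-adically: for an analytic function
`g(x) = ∑ c_n x^n` on `ℤ_p` and `m ≥ 1`, the divided differences
`∑_l g(j_l) / ∏_{k ≠ l} (j_l - j_k)` over `m`-tuples of pairwise distinct points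
converging to `s₀` converge to `g^(m-1)(s₀)/(m-1)!`, i.e. to the Taylor coefficient
`∑_n (n choose (m-1)) c_n s₀^(n-(m-1))`. -/
theorem stmt_8 (p : ℕ) [Fact p.Prime] (c : ℕ → ℚ_[p])
    (hconv : ∀ x : ℤ_[p], Summable fun n : ℕ => c n * (x : ℚ_[p]) ^ n)
    (g : ℤ_[p] → ℚ_[p]) (hg : ∀ x : ℤ_[p], g x = ∑' n : ℕ, c n * (x : ℚ_[p]) ^ n)
    (s₀ : ℤ_[p]) (m : ℕ) (hm : 1 ≤ m) :
    ∀ ε : ℝ, 0 < ε → ∃ δ : ℝ, 0 < δ ∧ ∀ j : Fin m → ℤ_[p], Function.Injective j →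
      (∀ l, ‖(j l : ℚ_[p]) - (s₀ : ℚ_[p])‖ < δ) →
      ‖(∑ l : Fin m, g (j l) /
            ∏ k ∈ Finset.univ.erase l, ((j l : ℚ_[p]) - (j k : ℚ_[p]))) -
          ∑' n : ℕ, (n.choose (m - 1) : ℚ_[p]) * c n * (s₀ : ℚ_[p]) ^ (n - (m - 1))‖
        < ε := by
  intro ε hε
  have hc : Tendsto c atTop (𝓝 0) := by simpa using (hconv 1).tendsto_atTop_zero
  obtain ⟨B, hBup⟩ := hc.norm.bddAbove_range
  have hB : ∀ n, ‖c n‖ ≤ B := fun n => hBup (Set.mem_range_self n)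
  have hB₀ : 0 ≤ B := (norm_nonneg _).trans (hB 0)
  refine ⟨ε / (B + 1), by positivity, fun j hj hjδ => ?_⟩
  have hdiv := hasSum_mul_dividedDiffPow (s := univ) (v := fun l => (j l : ℚ_[p]))
    fun l _ => hconv (j l)
  simp only [← hg] at hdiv
  rw [← hdiv.tsum_eq, ← hdiv.summable.tsum_sub
    (summable_choose_mul_mul_pow hc (PadicInt.norm_le_one s₀) (m - 1))]
  calc _ ≤ B * (ε / (B + 1)) := by
        refine IsUltrametricDist.norm_tsum_le_of_forall_le_of_nonneg (by positivity) fun n => ?_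
        rw [mul_comm (n.choose _ : ℚ_[p]), mul_assoc, ← mul_sub, norm_mul]
        refine mul_le_mul (hB n) ?_ (norm_nonneg _) hB₀
        simpa using norm_dividedDiffPow_sub_choose_le (v := fun l => (j l : ℚ_[p]))
          (PadicInt.norm_le_one s₀) (Subtype.coe_injective.comp hj).injOn (fun l _ => PadicInt.norm_le_one (j l))
          (fun l _ => (hjδ l).le) (univ_nonempty_iff.2 ⟨⟨0, hm⟩⟩) n
    _ < ε := by
        rw [mul_div_assoc', div_lt_iff₀ (by positivity)]
        linarith
end

section
/- Let $k$ be a complete nonarchimedean field, $\Lambda = \mathrm{diag}(\lambda_1, \dots, \lambda_n)$ with $\lambda_i \in k$, $|\lambda_i| = 1$, satisfying the diophantine condition: there are $C > 0$ and $\beta \ge 0$ such that $|\lambda^I - \lambda_j| \ge C |I|^{-\beta}$ for all $j$ and all multi-indices $I$ with $|I| \ge 2$. For $0 < \delta < \rho$ and any $g \in (A^{2}_{\rho}(k^n))^n$, the unique formal solution $w$ of $Lw = g$ (where $(Lw)(x) = w(\Lambda x) - \Lambda w(x)$) satisfies $w \in (A^{2}_{\rho - \delta}(k^n))^n$ with $\|w\|_{\rho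 - \delta} \le C_1 \frac{\|g\|_{\rho}}{\delta^{\beta}} \rho^{\beta}$ for a constant $C_1$ depending only on $C$, $\beta$ and $\|\Lambda\|$. -/
/-!
Comparing coefficients, `Lw = g` says `(λ^I - λ_j) a_I(w_j) = a_I(g_j)`, so the diophantine
condition gives `‖a_I(w_j)‖ ≤ C⁻¹ |I|^β ‖a_I(g_j)‖`. Shrinking the radius from `ρ` to `ρ - δ`
multiplies the weight `ρ^|I|` by `(1 - δ/ρ)^|I| ≤ exp (-|I| δ/ρ)`, and
`m^β exp (-m s) ≤ (β + 1)^β s^{-β}` absorbs the loss `|I|^β` uniformly in `I`.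
-/

/-- The weighted Gauss norm `‖φ‖_ρ = sup_I ‖a_I‖ ρ^{|I|}` on power series. -/
noncomputable def gaussNorm {K : Type*} [NormedField K] {n : ℕ} (ρ : ℝ)
    (φ : MvPowerSeries (Fin n) K) : ℝ :=
  ⨆ I : Fin n →₀ ℕ, ‖MvPowerSeries.coeff I φ‖ * ρ ^ (I.sum fun _ e => e)

/-- Membership in `A_ρ(Kⁿ)`. -/
def memAρ {K : Type*} [NormedField K] {n : ℕ} (ρ : ℝ)
    (φ : MvPowerSeries (Fin n) K) : Prop :=
  BddAbove (Set.range fun I : Fin n →₀ ℕ =>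
    ‖MvPowerSeries.coeff I φ‖ * ρ ^ (I.sum fun _ e => e))

/-- A power series has only terms of total degree `≥ 2`. -/
def deg2only {K : Type*} [NormedField K] {n : ℕ} (φ : MvPowerSeries (Fin n) K) : Prop :=
  ∀ I : Fin n →₀ ℕ, (I.sum fun _ e => e) ≤ 1 → MvPowerSeries.coeff I φ = 0

/-- The operator `(Lw)(x) = w(Λx) - Λw(x)`, on coefficients
`a_I ↦ (λ^I - λ_j) a_I` in the `j`-th component. -/
noncomputable def homOp {K : Type*} [NormedField K] {n : ℕ} (lam : Fin n → K)
    (w : Fin n → MvPowerSeries (Fin n) K) : Fin n → MvPowerSeries (Fin n) K :=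
  fun j => fun I : Fin n →₀ ℕ =>
    ((∏ i, lam i ^ I i) - lam j) * MvPowerSeries.coeff I (w j)

open MvPowerSeries (coeff)

def DiophantineCondition {K : Type*} [NormedField K] {n : ℕ} (lam : Fin n → K) (C β : ℝ) :
    Prop :=
  ∀ (j : Fin n) (I : Fin n →₀ ℕ), 2 ≤ (I.sum fun _ e => e) →
    C * ((I.sum fun _ e => e : ℕ) : ℝ) ^ (-β) ≤ ‖(∏ i, lam i ^ I i) - lam j‖

namespace Real

lemma rpow_le_add_one_rpow_mul_exp {β x : ℝ} (hβ : 0 ≤ β) (hx : 0 ≤ x) :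
    x ^ β ≤ (β + 1) ^ β * exp x := by
  have hβ1 : 0 < β + 1 := by linarith
  have hlin : x ≤ (β + 1) * exp (x / (β + 1)) := by
    calc x = (β + 1) * (x / (β + 1)) := by field_simp
      _ ≤ (β + 1) * exp (x / (β + 1)) := by
        gcongr; linarith [add_one_le_exp (x / (β + 1))]
  have hexp : x / (β + 1) * β ≤ x := by
    rw [div_mul_eq_mul_div, div_le_iff₀ hβ1]; nlinarith
  calc x ^ β ≤ ((β + 1) * exp (x / (β + 1))) ^ β := rpow_le_rpow hx hlin hβ
    _ = (β + 1) ^ β * exp (x / (β + 1) * β) := by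
      rw [mul_rpow hβ1.le (exp_pos _).le, exp_mul]
    _ ≤ (β + 1) ^ β * exp x := by gcongr

lemma natCast_rpow_mul_one_sub_pow_le {β s : ℝ} (hβ : 0 ≤ β) (hs0 : 0 < s) (hs1 : s ≤ 1)
    (m : ℕ) : (m : ℝ) ^ β * (1 - s) ^ m ≤ (β + 1) ^ β / s ^ β := by
  have hdecay : (1 - s) ^ m ≤ exp (-(m * s)) := by
    calc (1 - s) ^ m ≤ exp (-s) ^ m :=
          pow_le_pow_left₀ (by linarith) (by linarith [add_one_le_exp (-s)]) m
      _ = exp (-(m * s)) := by rw [← exp_nat_mul]; ring_nf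
  have hms : (m : ℝ) ^ β = (m * s) ^ β / s ^ β := by
    rw [mul_rpow (Nat.cast_nonneg m) hs0.le]
    field_simp
  calc (m : ℝ) ^ β * (1 - s) ^ m ≤ (m * s) ^ β / s ^ β * exp (-(m * s)) := by
        rw [hms]; gcongr
    _ ≤ (β + 1) ^ β * exp (m * s) / s ^ β * exp (-(m * s)) := by
        gcongr; exact rpow_le_add_one_rpow_mul_exp hβ (by positivity)
    _ = (β + 1) ^ β / s ^ β := by
        rw [exp_neg]; field_simp

end Real

section GaussNorm

variable {K : Type*} [NormedField K] {n : ℕ} {ρ : ℝ} {φ : MvPowerSeries (Fin n) K}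

lemma norm_coeff_mul_pow_le_gaussNorm (h : memAρ ρ φ) (I : Fin n →₀ ℕ) :
    ‖coeff I φ‖ * ρ ^ (I.sum fun _ e => e) ≤ gaussNorm ρ φ :=
  le_ciSup h I

lemma gaussNorm_nonneg (hρ : 0 ≤ ρ) : 0 ≤ gaussNorm ρ φ :=
  Real.iSup_nonneg fun _ => by positivity

lemma memAρ_of_forall_le {B : ℝ}
    (h : ∀ I : Fin n →₀ ℕ, ‖coeff I φ‖ * ρ ^ (I.sum fun _ e => e) ≤ B) : memAρ ρ φ :=
  ⟨B, by rintro _ ⟨I, rfl⟩; exact h I⟩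

lemma gaussNorm_le_of_forall_le {B : ℝ}
    (h : ∀ I : Fin n →₀ ℕ, ‖coeff I φ‖ * ρ ^ (I.sum fun _ e => e) ≤ B) : gaussNorm ρ φ ≤ B :=
  ciSup_le h

end GaussNorm

section SmallDivisors

variable {K : Type*} [NormedField K] {n : ℕ} {lam : Fin n → K} {C β : ℝ}
  {g w : Fin n → MvPowerSeries (Fin n) K}

lemma norm_coeff_le_of_homOp_eq (hC : 0 < C) (hdioph : DiophantineCondition lam C β)
    (hLw : homOp lam w = g) (j : Fin n) {I : Fin n →₀ ℕ} (hI : 2 ≤ (I.sum fun _ e => e)) :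
    ‖coeff I (w j)‖ ≤ ((I.sum fun _ e => e : ℕ) : ℝ) ^ β / C * ‖coeff I (g j)‖ := by
  set m := I.sum fun _ e => e
  have hcoeff : ((∏ i, lam i ^ I i) - lam j) * coeff I (w j) = coeff I (g j) := by
    rw [← hLw]; rfl
  have hm : (0 : ℝ) < m := by norm_cast; omega
  have hdenom := hdioph j I hI
  rw [Real.rpow_neg hm.le] at hdenom
  rw [div_mul_eq_mul_div, le_div_iff₀ hC]
  calc ‖coeff I (w j)‖ * C = ‖coeff I (w j)‖ * (C * ((m : ℝ) ^ β)⁻¹) * (m : ℝ) ^ β := by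
        field_simp
    _ ≤ ‖coeff I (w j)‖ * ‖(∏ i, lam i ^ I i) - lam j‖ * (m : ℝ) ^ β := by gcongr
    _ = (m : ℝ) ^ β * ‖coeff I (g j)‖ := by rw [← hcoeff, norm_mul]; ring

lemma norm_coeff_mul_pow_le_of_homOp_eq (hC : 0 < C) (hβ : 0 ≤ β)
    (hdioph : DiophantineCondition lam C β) (hLw : homOp lam w = g) {ρ δ : ℝ} (hδ : 0 < δ)
    (hδρ : δ < ρ) (j : Fin n) (hg : memAρ ρ (g j)) (hw : deg2only (w j)) (I : Fin n →₀ ℕ) :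
    ‖coeff I (w j)‖ * (ρ - δ) ^ (I.sum fun _ e => e) ≤
      (β + 1) ^ β / C * gaussNorm ρ (g j) * ρ ^ β / δ ^ β := by
  have hρ : 0 < ρ := hδ.trans hδρ
  set m := I.sum fun _ e => e
  by_cases hm : m ≤ 1
  · rw [hw I hm, norm_zero, zero_mul]
    have := gaussNorm_nonneg (φ := g j) hρ.le
    positivity
  have hshrink : (ρ - δ) ^ m = ρ ^ m * (1 - δ / ρ) ^ m := by
    rw [← mul_pow]; congr 1; field_simp
  calc ‖coeff I (w j)‖ * (ρ - δ) ^ m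
      ≤ (m : ℝ) ^ β / C * ‖coeff I (g j)‖ * (ρ - δ) ^ m := by
        gcongr
        exact norm_coeff_le_of_homOp_eq hC hdioph hLw j (by omega)
    _ = C⁻¹ * (‖coeff I (g j)‖ * ρ ^ m) * ((m : ℝ) ^ β * (1 - δ / ρ) ^ m) := by
        rw [hshrink]; ring
    _ ≤ C⁻¹ * gaussNorm ρ (g j) * ((β + 1) ^ β / (δ / ρ) ^ β) := by
        have hs1 : δ / ρ ≤ 1 := (div_le_one hρ).2 hδρ.le
        have hs1' : 0 ≤ 1 - δ / ρ := by linarith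
        have := gaussNorm_nonneg (φ := g j) hρ.le
        gcongr C⁻¹ * ?_ * ?_
        · exact norm_coeff_mul_pow_le_gaussNorm hg I
        · exact Real.natCast_rpow_mul_one_sub_pow_le hβ (by positivity) hs1 m
    _ = (β + 1) ^ β / C * gaussNorm ρ (g j) * ρ ^ β / δ ^ β := by
        rw [Real.div_rpow hδ.le hρ.le]; field_simp

end SmallDivisors

theorem stmt_11_general {K : Type*} [NontriviallyNormedField K] {n : ℕ} (lam : Fin n → K)
    (C β : ℝ) (hC : 0 < C) (hβ : 0 ≤ β)
    (hdioph : ∀ (j : Fin n) (I : Fin n →₀ ℕ), 2 ≤ (I.sum fun _ e => e) →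
      C * ((I.sum fun _ e => e : ℕ) : ℝ) ^ (-β) ≤ ‖(∏ i, lam i ^ I i) - lam j‖) :
    ∃ C₁ : ℝ, 0 < C₁ ∧ ∀ ρ δ : ℝ, 0 < δ → δ < ρ →
      ∀ g w : Fin n → MvPowerSeries (Fin n) K,
        (∀ j, deg2only (g j)) → (∀ j, memAρ ρ (g j)) →
        (∀ j, deg2only (w j)) → homOp lam w = g →
        (∀ j, memAρ (ρ - δ) (w j)) ∧
          ∀ j, gaussNorm (ρ - δ) (w j) ≤ C₁ * gaussNorm ρ (g j) * ρ ^ β / δ ^ β := by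
  refine ⟨(β + 1) ^ β / C, by positivity, fun ρ δ hδ hδρ g w _ hg hw hLw => ?_⟩
  have hbound j := norm_coeff_mul_pow_le_of_homOp_eq hC hβ hdioph hLw hδ hδρ j (hg j) (hw j)
  exact ⟨fun j => memAρ_of_forall_le (hbound j), fun j => gaussNorm_le_of_forall_le (hbound j)⟩

/-- Small denominators estimate (version of `[HY, Lemma 15]`): if `Λ = diag(λᵢ)` with
`‖λᵢ‖ = 1` satisfies the diophantine condition `‖λ^I - λ_j‖ ≥ C |I|^{-β}` for `|I| ≥ 2`,
then there is a constant `C₁ > 0` (depending only on `C`, `β` and `‖Λ‖`) such that for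
all `0 < δ < ρ` and all `g ∈ (A²_ρ(Kⁿ))ⁿ`, the unique formal solution `w` of `Lw = g`
with components of degree `≥ 2` lies in `(A²_{ρ-δ}(Kⁿ))ⁿ` with
`‖w‖_{ρ-δ} ≤ C₁ ‖g‖_ρ ρ^β / δ^β`. -/
theorem stmt_11 {K : Type*} [NontriviallyNormedField K] [CompleteSpace K]
    [IsUltrametricDist K] {n : ℕ} (lam : Fin n → K)
    (hnorm : ∀ i, ‖lam i‖ = 1)
    (C β : ℝ) (hC : 0 < C) (hβ : 0 ≤ β)
    (hdioph : ∀ (j : Fin n) (I : Fin n →₀ ℕ), 2 ≤ (I.sum fun _ e => e) →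
      C * ((I.sum fun _ e => e : ℕ) : ℝ) ^ (-β) ≤ ‖(∏ i, lam i ^ I i) - lam j‖) :
    ∃ C₁ : ℝ, 0 < C₁ ∧ ∀ ρ δ : ℝ, 0 < δ → δ < ρ →
      ∀ g w : Fin n → MvPowerSeries (Fin n) K,
        (∀ j, deg2only (g j)) → (∀ j, memAρ ρ (g j)) →
        (∀ j, deg2only (w j)) → homOp lam w = g →
        (∀ j, memAρ (ρ - δ) (w j)) ∧
          ∀ j, gaussNorm (ρ - δ) (w j) ≤ C₁ * gaussNorm ρ (g j) * ρ ^ β / δ ^ β :=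
  stmt_11_general lam C β hC hβ hdioph
end

section
/- Let $R$ be a local ring with maximal ideal $\mathfrak{m}$ and residue field $\kappa$, and let $a$ be an $m \times m$ matrix over $R$ whose reduction $\bar{a}$ modulo $\mathfrak{m}$ is diagonalizable over $\kappa$ with eigenvalues $\bar\lambda_1, \dots, \bar\lambda_m \in \kappa$ that lift to $\lambda_1, \dots, \lambda_m \in R$ which are eigenvalues of $a$ with $\lambda_i - \lambda_j$ a unit whenever $\bar\lambda_i \ne \bar\lambda_j$. For each $i$, the operator $p_i := \prod_{j :\, \lambda_j \ne \lambda_i} (\lambda_i - \lambda_j)^{-1}(a - \lambda_j)$ is well-defined; if $e_1, \dots, e_m \in R^m$ reduce to an eigenbasis of $\bar{a}$ with $\bar{a} \bar{e}_i = \bar\lambda_i \bar{e}_i$, and $a$ satisfies $\prod_{\text{distinct } \lambda}(a - \lambda) = 0$, then $E_i := p_i e_i$ satisfies $a E_i = \lambda_i E_i$, the reduction of $E_i$ is $\bar{e}_i$, and $E_1, \dots, E_m$ form a basis of $R^m$. -/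
/-!
The projector is `p_i = f_i(a)` for the Lagrange-type polynomial
`f_i = ∏_{μ ≠ λ_i} (λ_i - μ)⁻¹ (X - μ)`. Since `(X - λ_i) f_i` is a multiple of `∏_μ (X - μ)`,
which annihilates `a`, we get `a p_i = λ_i p_i`. Modulo `𝔪`, `ē_i` is an eigenvector of `ā`, so
`p̄_i ē_i = f̄_i(λ̄_i) ē_i = ē_i` because `f_i(λ_i) = 1`. Hence the matrix with rows `E_i` reduces
to the matrix with rows `ē_i`, whose determinant is nonzero, so its own determinant is a unit.
-/

open IsLocalRing Polynomial Matrix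

section Algebra

variable {R A : Type*} [CommRing R] [Ring A] [Algebra R A]

theorem aeval_finset_prod_eq_list_prod (a : A) (s : Finset R) (f : R → R[X]) :
    aeval a (∏ μ ∈ s, f μ) = (s.toList.map fun μ => aeval a (f μ)).prod := by
  rw [← Finset.prod_map_toList, map_list_prod, List.map_map]
  rfl

theorem aeval_X_sub_C_eq_sub_smul_one (a : A) (μ : R) : aeval a (X - C μ) = a - μ • 1 := by
  rw [map_sub, aeval_X, aeval_C, Algebra.algebraMap_eq_smul_one]

noncomputable def spectralPoly [DecidableEq R] (S : Finset R) (lam : R) : R[X] :=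
  ∏ μ ∈ S.erase lam, C (Ring.inverse (lam - μ)) * (X - C μ)

variable [DecidableEq R]

theorem aeval_spectralPoly (a : A) (S : Finset R) (lam : R) :
    aeval a (spectralPoly S lam) =
      ((S.erase lam).toList.map fun μ => Ring.inverse (lam - μ) • (a - μ • 1)).prod := by
  simp only [spectralPoly, aeval_finset_prod_eq_list_prod, map_mul, aeval_C,
    aeval_X_sub_C_eq_sub_smul_one, Algebra.algebraMap_eq_smul_one, smul_mul_assoc, one_mul]

theorem prod_X_sub_C_dvd_X_sub_C_mul_spectralPoly {S : Finset R} {lam : R} (h : lam ∈ S) :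
    ∏ μ ∈ S, (X - C μ) ∣ (X - C lam) * spectralPoly S lam := by
  refine ⟨∏ μ ∈ S.erase lam, C (Ring.inverse (lam - μ)), ?_⟩
  rw [spectralPoly, Finset.prod_mul_distrib, ← Finset.mul_prod_erase S _ h]
  ring

theorem mul_aeval_spectralPoly {a : A} {S : Finset R} {lam : R} (h : lam ∈ S)
    (ha : aeval a (∏ μ ∈ S, (X - C μ)) = 0) :
    a * aeval a (spectralPoly S lam) = lam • aeval a (spectralPoly S lam) := by
  obtain ⟨q, hq⟩ := prod_X_sub_C_dvd_X_sub_C_mul_spectralPoly h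
  have hzero := congrArg (aeval a) hq
  rwa [map_mul, map_mul, ha, zero_mul, aeval_X_sub_C_eq_sub_smul_one, sub_mul, sub_eq_zero,
    smul_mul_assoc, one_mul] at hzero

theorem eval_spectralPoly_self {S : Finset R} {lam : R}
    (h : ∀ μ ∈ S.erase lam, IsUnit (lam - μ)) : (spectralPoly S lam).eval lam = 1 := by
  rw [spectralPoly, eval_prod]
  refine Finset.prod_eq_one fun μ hμ => ?_
  rw [eval_mul, eval_C, eval_sub, eval_X, eval_C, Ring.inverse_mul_cancel _ (h μ hμ)]

end Algebra

section Matrix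

variable {n R K : Type*} [Fintype n] [DecidableEq n] [CommRing R] [CommRing K]

theorem Matrix.aeval_mulVec_of_mulVec_eq_smul {A : Matrix n n K} {v : n → K} {μ : K}
    (h : A *ᵥ v = μ • v) (p : K[X]) : aeval A p *ᵥ v = p.eval μ • v := by
  have hend := Module.End.aeval_apply_of_mem_apply_eq_smul (f := toLin' A) (p := p)
    (by simpa using h)
  have hlin : toLin' (aeval A p) = aeval (toLin' A) p :=
    (aeval_algHom_apply toLinAlgEquiv' A p).symm
  rwa [← toLin'_apply, hlin]

theorem Matrix.comp_aeval_mulVec_of_map_mulVec_eq_smul (f : R →+* K) {a : Matrix n n R}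
    {v : n → R} {μ : R} (h : a.map f *ᵥ (f ∘ v) = f μ • (f ∘ v)) (p : R[X]) :
    f ∘ (aeval a p *ᵥ v) = f (p.eval μ) • (f ∘ v) := by
  have hcomm : (algebraMap K (Matrix n n K)).comp f = f.mapMatrix.comp (algebraMap R _) := by
    ext x i j
    simp [Matrix.algebraMap_matrix_apply, apply_ite f]
  funext j
  rw [Function.comp_apply, RingHom.map_mulVec, ← RingHom.mapMatrix_apply,
    map_aeval_eq_aeval_map hcomm, RingHom.mapMatrix_apply,
    Matrix.aeval_mulVec_of_mulVec_eq_smul h, eval_map, eval₂_at_apply]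

theorem isUnit_det_of_det_map_residue_ne_zero [IsLocalRing R] {M : Matrix n n R}
    (h : (M.map (residue R)).det ≠ 0) : IsUnit M.det :=
  (residue_ne_zero_iff_isUnit _).mp (by rwa [RingHom.map_det])

end Matrix

/-- Diagonalization over a local ring via spectral projectors: let `R` be a local ring
with residue field `κ`, `a` an `m × m` matrix over `R` whose reduction is
diagonalizable over `κ` with eigenvalues the reductions of `λ₁,…,λ_m ∈ R`, where
`λ_i - λ_j` is a unit whenever the residues differ (and distinct `λ_i` have distinct
residues). Suppose `e₁,…,e_m ∈ R^m` reduce to an eigenbasis and `a` is annihilated by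
`∏_{distinct λ} (a - λ)`. Then `E_i := p_i e_i`, with the spectral projector
`p_i = ∏_{μ ≠ λ_i} (λ_i - μ)⁻¹ (a - μ)` (product over the distinct eigenvalues
`μ ≠ λ_i`), satisfies `a E_i = λ_i E_i`, reduces to `ē_i`, and `E₁,…,E_m` form a basis
of `R^m`. -/
theorem stmt_19 {R : Type*} [CommRing R] [IsLocalRing R] [DecidableEq R]
    (m : ℕ) (a : Matrix (Fin m) (Fin m) R) (lam : Fin m → R)
    (hunit : ∀ i j, residue R (lam i) ≠ residue R (lam j) → IsUnit (lam i - lam j))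
    (hdist : ∀ i j, lam i ≠ lam j → residue R (lam i) ≠ residue R (lam j))
    (e : Fin m → (Fin m → R))
    (hbasis : (Matrix.of fun i j => residue R (e i j)).det ≠ 0)
    (heig : ∀ i, (a.map (residue R)).mulVec (fun j => residue R (e i j)) =
      residue R (lam i) • fun j => residue R (e i j))
    (hmin : (((Finset.univ.image lam).toList.map
      (fun μ => a - μ • (1 : Matrix (Fin m) (Fin m) R))).prod) = 0) :
    ∀ i : Fin m,
      letI p : Matrix (Fin m) (Fin m) R :=
        ((((Finset.univ.image lam).erase (lam i)).toList.map
          (fun μ => Ring.inverse (lam i - μ) • (a - μ • (1 : Matrix (Fin m) (Fin m) R)))).prod)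
      a.mulVec (p.mulVec (e i)) = lam i • p.mulVec (e i) ∧
        (fun j => residue R (p.mulVec (e i) j)) = (fun j => residue R (e i j)) ∧
        IsUnit (Matrix.of fun i' j =>
          (((((Finset.univ.image lam).erase (lam i')).toList.map
            (fun μ => Ring.inverse (lam i' - μ) •
              (a - μ • (1 : Matrix (Fin m) (Fin m) R)))).prod).mulVec (e i')) j).det := by
  set S := Finset.univ.image lam
  have hann : aeval a (∏ μ ∈ S, (X - C μ)) = 0 := by
    simpa only [aeval_finset_prod_eq_list_prod, aeval_X_sub_C_eq_sub_smul_one] using hmin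
  have hunits : ∀ i, ∀ μ ∈ S.erase (lam i), IsUnit (lam i - μ) := by
    intro i μ hμ
    obtain ⟨hne, hμS⟩ := Finset.mem_erase.mp hμ
    obtain ⟨j, -, rfl⟩ := Finset.mem_image.mp hμS
    exact hunit i j (hdist i j (Ne.symm hne))
  have hres (i : Fin m) :
      residue R ∘ (aeval a (spectralPoly S (lam i)) *ᵥ e i) = residue R ∘ e i := by
    rw [comp_aeval_mulVec_of_map_mulVec_eq_smul _ (heig i), eval_spectralPoly_self (hunits i),
      map_one, one_smul]
  intro i
  simp only [← aeval_spectralPoly]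
  refine ⟨?_, hres i, isUnit_det_of_det_map_residue_ne_zero ?_⟩
  · rw [mulVec_mulVec,
      mul_aeval_spectralPoly (Finset.mem_image_of_mem lam (Finset.mem_univ i)) hann, smul_mulVec]
  · convert hbasis using 2
    ext i' j
    exact congrFun (hres i') j
end
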